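/- arXiv:2106.02163 — 4 statements merged into one kernel-verified Lean document; each statement's English description precedes it below -/
import Mathlib

section
/- Let V and W be vector spaces over a field F, and suppose there is a linear map g: F^R -> F (for a subset R of [N] not containing index i) such that for every codeword c in a linear code C ≤ F^N with systematic encoding, g applied to the restriction of c to R equals c_i. Then there exists a nonzero dual codeword c⊥ in C⊥ whose support is contained in R ∪ {i} and which is nonzero at coordinate i. -/
/-- If a linear code `C ≤ F^N` with a systematic encoding admits a linear
function `g(c|_R) = ∑_{j ∈ R} α_j c_j` recovering `c_i` from a set `R` not
containing `i`, then there is a nonzero dual codeword supported in `R ∪ {i}`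
and nonzero at `i`. -/
theorem stmt_0 {F : Type*} [Field F] {N n : ℕ} (hn : n ≤ N)
    (C : Submodule F (Fin N → F))
    (E : (Fin n → F) →ₗ[F] (Fin N → F))
    (hrange : LinearMap.range E = C)
    (hsys : ∀ (x : Fin n → F) (j : Fin n), E x (Fin.castLE hn j) = x j)
    (i : Fin N) (R : Finset (Fin N)) (hiR : i ∉ R)
    (α : Fin N → F)
    (hg : ∀ c ∈ C, ∑ j ∈ R, α j * c j = c i) :
    ∃ d : Fin N → F, d ≠ 0 ∧ (∀ c ∈ C, ∑ m, d m * c m = 0) ∧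
      (∀ m, d m ≠ 0 → m ∈ insert i R) ∧ d i ≠ 0 := by
  refine ⟨fun m => if m = i then -1 else if m ∈ R then α m else 0, ?_, ?_, ?_, ?_⟩
  · intro h
    have := congrFun h i
    simp at this
  · intro c hc
    have key : ∀ m, (if m = i then (-1 : F) else if m ∈ R then α m else 0) * c m
        = (if m ∈ R then α m * c m else 0) + (if m = i then -c m else 0) := by
      intro m
      by_cases hm : m = i
      · subst hm
        simp [hiR]
      · by_cases hmR : m ∈ R <;> simp [hm, hmR]
    rw [Finset.sum_congr rfl fun m _ => key m, Finset.sum_add_distrib,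
      Finset.sum_ite_mem, Finset.univ_inter, Finset.sum_ite_eq' Finset.univ i fun m => -c m]
    simp [hg c hc]
  · intro m hm
    by_cases h : m = i
    · simp [h]
    · simp [h] at hm ⊢
      by_contra hmR
      simp [hmR] at hm
  · simp
end

section
/- Let C ≤ F^N be a linear k-batch code with systematic encoding on n information symbols, with k ≥ 3, and let t = ⌊k/3⌋. Then for every tuple i_1 > i_2 > ... > i_t of indices in [n], there exist dual codewords c^{(j,1)}, c^{(j,2)} ∈ C⊥ for j = 1, ..., t such that supp(c^{(j,1)}) ∩ supp(c^{(j,2)}) = {i_j} for each j. -/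
/-- `E` is a systematic encoding: the first `n` codeword symbols are the
information symbols. -/
def IsSystematic {F : Type*} [Field F] {n N : ℕ} (hn : n ≤ N)
    (E : (Fin n → F) →ₗ[F] (Fin N → F)) : Prop :=
  ∀ (x : Fin n → F) (j : Fin n), E x (Fin.castLE hn j) = x j

/-- `E` encodes a (linear, primitive, multiset) `k`-batch code: every multiset
of `k` requests (given by `ι : Fin k → Fin n`) admits pairwise disjoint
recovery sets `R j` and linear recovery functions `c ↦ ∑_{m ∈ R j} α j m * c m`. -/
def IsBatchCode {F : Type*} [Field F] {n N : ℕ} (hn : n ≤ N)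
    (E : (Fin n → F) →ₗ[F] (Fin N → F)) (k : ℕ) : Prop :=
  ∀ ι : Fin k → Fin n, ∃ (R : Fin k → Finset (Fin N)) (α : Fin k → Fin N → F),
    (∀ j j', j ≠ j' → Disjoint (R j) (R j')) ∧
    (∀ (j : Fin k) (x : Fin n → F), ∑ m ∈ R j, α j m * E x m = x (ι j))

set_option maxHeartbeats 1600000 in
/-- For a linear `k`-batch code with systematic encoding, `k ≥ 3`, `t = ⌊k/3⌋`:
for every decreasing tuple `i_1 > ⋯ > i_t` in `[n]` there are dual codewords
`c^{(j,1)}, c^{(j,2)}` with `supp(c^{(j,1)}) ∩ supp(c^{(j,2)}) = {i_j}`. -/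
theorem stmt_3 {F : Type*} [Field F] {n N k : ℕ} (hn : n ≤ N) (hk : 3 ≤ k)
    (E : (Fin n → F) →ₗ[F] (Fin N → F))
    (hsys : IsSystematic hn E) (hbatch : IsBatchCode hn E k)
    (i : Fin (k / 3) → Fin n) (hdec : ∀ a b : Fin (k / 3), a < b → i b < i a) :
    ∃ c₁ c₂ : Fin (k / 3) → (Fin N → F),
      (∀ j, ∀ u ∈ LinearMap.range E, ∑ m, c₁ j m * u m = 0) ∧
      (∀ j, ∀ u ∈ LinearMap.range E, ∑ m, c₂ j m * u m = 0) ∧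
      (∀ (j : Fin (k / 3)) (m : Fin N),
        (c₁ j m ≠ 0 ∧ c₂ j m ≠ 0) ↔ m = Fin.castLE hn (i j)) := by
  classical
  have htpos : 0 < k / 3 := Nat.div_pos hk (by norm_num)
  have h33 : k / 3 * 3 ≤ k := Nat.div_mul_le_self k 3
  -- the request multiset: each i_j three times
  set ι : Fin k → Fin n := fun j =>
    if h : j.val / 3 < k / 3 then i ⟨j.val / 3, h⟩ else i ⟨0, htpos⟩ with hι
  obtain ⟨R, α, hdisj, hrec⟩ := hbatch ι
  -- for each j, find two recovery sets avoiding the position of i j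
  have key : ∀ j : Fin (k / 3), ∃ a b : Fin k, a ≠ b ∧
      Fin.castLE hn (i j) ∉ R a ∧ Fin.castLE hn (i j) ∉ R b ∧
      (∀ x, ∑ m ∈ R a, α a m * E x m = x (i j)) ∧
      (∀ x, ∑ m ∈ R b, α b m * E x m = x (i j)) := by
    intro j
    have hj3 : 3 * j.val + 2 < k := by
      have := j.isLt; omega
    set j0 : Fin k := ⟨3 * j.val, by omega⟩ with hj0
    set j1 : Fin k := ⟨3 * j.val + 1, by omega⟩ with hj1
    set j2 : Fin k := ⟨3 * j.val + 2, by omega⟩ with hj2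
    have hι0 : ι j0 = i j := by
      simp only [hι, hj0]
      have hd : (3 * j.val) / 3 = j.val := by omega
      rw [dif_pos (by rw [hd]; exact j.isLt)]
      congr 1; ext; simp [hd]
    have hι1 : ι j1 = i j := by
      simp only [hι, hj1]
      have hd : (3 * j.val + 1) / 3 = j.val := by omega
      rw [dif_pos (by rw [hd]; exact j.isLt)]
      congr 1; ext; simp [hd]
    have hι2 : ι j2 = i j := by
      simp only [hι, hj2]
      have hd : (3 * j.val + 2) / 3 = j.val := by omega
      rw [dif_pos (by rw [hd]; exact j.isLt)]
      congr 1; ext; simp [hd]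
    have h01 : j0 ≠ j1 := by simp [hj0, hj1, Fin.ext_iff]
    have h02 : j0 ≠ j2 := by simp [hj0, hj2, Fin.ext_iff]
    have h12 : j1 ≠ j2 := by simp [hj1, hj2, Fin.ext_iff]
    set p : Fin N := Fin.castLE hn (i j) with hp
    by_cases h0 : p ∈ R j0
    · refine ⟨j1, j2, h12, ?_, ?_, ?_, ?_⟩
      · exact fun h => (hdisj j0 j1 h01).forall_ne_finset h0 h rfl
      · exact fun h => (hdisj j0 j2 h02).forall_ne_finset h0 h rfl
      · intro x; rw [hrec j1 x, hι1]
      · intro x; rw [hrec j2 x, hι2]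
    · by_cases h1 : p ∈ R j1
      · refine ⟨j0, j2, h02, h0, ?_, ?_, ?_⟩
        · exact fun h => (hdisj j1 j2 h12).forall_ne_finset h1 h rfl
        · intro x; rw [hrec j0 x, hι0]
        · intro x; rw [hrec j2 x, hι2]
      · refine ⟨j0, j1, h01, h0, h1, ?_, ?_⟩
        · intro x; rw [hrec j0 x, hι0]
        · intro x; rw [hrec j1 x, hι1]
  choose a b hab ha hb hra hrb using key
  -- the dual codewords
  refine ⟨fun j m => (if m ∈ R (a j) then α (a j) m else 0) -
        (if m = Fin.castLE hn (i j) then 1 else 0),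
      fun j m => (if m ∈ R (b j) then α (b j) m else 0) -
        (if m = Fin.castLE hn (i j) then 1 else 0), ?_, ?_, ?_⟩
  · rintro j u ⟨x, rfl⟩
    have h1 : ∑ m, (if m ∈ R (a j) then α (a j) m else 0) * E x m
        = ∑ m ∈ R (a j), α (a j) m * E x m := by
      simp only [ite_mul, zero_mul]
      rw [Finset.sum_ite_mem, Finset.univ_inter]
    have h2 : ∑ m, (if m = Fin.castLE hn (i j) then (1 : F) else 0) * E x m
        = E x (Fin.castLE hn (i j)) := by
      rw [Finset.sum_congr rfl
        (fun m _ => ite_mul (m = Fin.castLE hn (i j)) (1 : F) 0 (E x m))]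
      simp
    simp only [sub_mul, Finset.sum_sub_distrib, h1, h2, hra j x, hsys x (i j), sub_self]
  · rintro j u ⟨x, rfl⟩
    have h1 : ∑ m, (if m ∈ R (b j) then α (b j) m else 0) * E x m
        = ∑ m ∈ R (b j), α (b j) m * E x m := by
      simp only [ite_mul, zero_mul]
      rw [Finset.sum_ite_mem, Finset.univ_inter]
    have h2 : ∑ m, (if m = Fin.castLE hn (i j) then (1 : F) else 0) * E x m
        = E x (Fin.castLE hn (i j)) := by
      rw [Finset.sum_congr rfl
        (fun m _ => ite_mul (m = Fin.castLE hn (i j)) (1 : F) 0 (E x m))]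
      simp
    simp only [sub_mul, Finset.sum_sub_distrib, h1, h2, hrb j x, hsys x (i j), sub_self]
  · intro j m
    constructor
    · rintro ⟨hc1, hc2⟩
      by_contra hm
      simp only [if_neg hm, sub_zero] at hc1 hc2
      by_cases hma : m ∈ R (a j)
      · have hmb : m ∉ R (b j) := fun h => (hdisj (a j) (b j) (hab j)).forall_ne_finset hma h rfl
        exact hc2 (if_neg hmb)
      · exact hc1 (if_neg hma)
    · rintro rfl
      simp only [if_pos rfl, if_neg (ha j), if_neg (hb j)]
      norm_num
end

section
/- Fix positive integers N, t and a field F. Call a simple tensor e_{i'_1} ⊗ ... ⊗ e_{i'_{2t}} in F^{N^{2t}} 'good' if the multiset {i'_1,...,i'_{2t}} has exactly t distinct elements, each appearing exactly twice. Suppose c^{(j,ℓ)} ∈ F^N for j ∈ [t], ℓ ∈ {1,2} are vectors and i_1,...,i_t ∈ [N] are distinct indices such that: (a) each i_j lies in the supports of c^{(j,1)} and c^{(j,2)} and in at most one other support c^{(j',ℓ')}; (b) every index in [N] \ {i_1,...,i_t} lies in at most one support. Then for any bijection π: [2t] → [t] × [2], the tensor w = ⊗_{j=1}^{2t} c^{(π(j))}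 has at most 3^t good simple tensors with nonzero coefficient in its standard basis representation. -/
/-- A tuple `idx ∈ [N]^{2t}` indexes a *good* simple tensor if its multiset of
entries has exactly `t` distinct elements, each appearing exactly twice. -/
def IsGoodTensor {N t : ℕ} (idx : Fin (2 * t) → Fin N) : Prop :=
  (Finset.univ.image idx).card = t ∧
  ∀ m ∈ Finset.univ.image idx, (Finset.univ.filter (fun j => idx j = m)).card = 2

/-- If vectors `c^{(j,ℓ)}` (for `j ∈ [t]`, `ℓ ∈ {1,2}`) and distinct indices
`i_1,…,i_t` satisfy: (a) each `i_j` lies in the supports of `c^{(j,1)}` and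
`c^{(j,2)}` and in at most one other support, and (b) every other index lies in
at most one support, then for any bijection `π : [2t] → [t]×[2]`, the tensor
`⊗_j c^{(π(j))}` has at most `3^t` good simple tensors with nonzero coefficient
in its standard basis representation. -/
theorem stmt_5 {F : Type*} [Field F] {N t : ℕ} (hN : 0 < N) (ht : 0 < t)
    (c : Fin t × Fin 2 → (Fin N → F)) (i : Fin t → Fin N)
    (hinj : Function.Injective i)
    (ha : ∀ j : Fin t, c (j, 0) (i j) ≠ 0 ∧ c (j, 1) (i j) ≠ 0 ∧
      {p : Fin t × Fin 2 | c p (i j) ≠ 0 ∧ p ≠ (j, 0) ∧ p ≠ (j, 1)}.ncard ≤ 1)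
    (hb : ∀ m : Fin N, m ∉ Set.range i → {p : Fin t × Fin 2 | c p m ≠ 0}.ncard ≤ 1)
    (π : Fin (2 * t) ≃ Fin t × Fin 2) :
    {idx : Fin (2 * t) → Fin N |
        IsGoodTensor idx ∧ (∏ j, c (π j) (idx j)) ≠ 0}.ncard ≤ 3 ^ t := by
  classical
  set T : Set (Fin (2 * t) → Fin N) :=
    {idx | IsGoodTensor idx ∧ (∏ j, c (π j) (idx j)) ≠ 0} with hT
  -- positions whose support contains i k
  set S : Fin t → Finset (Fin (2 * t)) :=
    fun k => Finset.univ.filter (fun j' => c (π j') (i k) ≠ 0) with hSdef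
  have hScard : ∀ k, (S k).card ≤ 3 := by
    intro k
    set E : Finset (Fin t × Fin 2) :=
      Finset.univ.filter (fun p => c p (i k) ≠ 0 ∧ p ≠ (k, 0) ∧ p ≠ (k, 1)) with hE
    have hEcard : E.card ≤ 1 := by
      have h := (ha k).2.2
      have hcoe : {p : Fin t × Fin 2 | c p (i k) ≠ 0 ∧ p ≠ (k, 0) ∧ p ≠ (k, 1)} = ↑E := by
        ext p; simp [hE]
      rwa [hcoe, Set.ncard_coe_finset] at h
    have hPsub : (Finset.univ.filter (fun p : Fin t × Fin 2 => c p (i k) ≠ 0)) ⊆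
        insert (k, 0) (insert (k, 1) E) := by
      intro p hp
      simp only [Finset.mem_filter, Finset.mem_univ, true_and] at hp
      by_cases h0 : p = (k, 0)
      · simp [h0]
      by_cases h1 : p = (k, 1)
      · simp [h1]
      · simp [hE, hp, h0, h1]
    have hP : (Finset.univ.filter (fun p : Fin t × Fin 2 => c p (i k) ≠ 0)).card ≤ 3 := by
      have := Finset.card_le_card hPsub
      have h1 := Finset.card_insert_le (k, 0) (insert (k, 1) E)
      have h2 := Finset.card_insert_le (k, 1) E
      omega
    refine le_trans (Finset.card_le_card_of_injOn π ?_ π.injective.injOn) hP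
    intro j hj
    simp only [hSdef, Finset.mem_filter, Finset.mem_univ, true_and] at hj ⊢
    simpa using hj
  -- the target finset of functions
  set B : Finset (Fin t → Finset (Fin (2 * t))) :=
    Fintype.piFinset (fun k => (S k).powersetCard 2) with hB
  have hBcard : B.card ≤ 3 ^ t := by
    rw [hB, Fintype.card_piFinset]
    calc ∏ k, ((S k).powersetCard 2).card ≤ ∏ _k : Fin t, 3 := by
          apply Finset.prod_le_prod'
          intro k _
          rw [Finset.card_powersetCard]
          calc (S k).card.choose 2 ≤ (3 : ℕ).choose 2 := Nat.choose_le_choose 2 (hScard k)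
            _ = 3 := by norm_num
      _ = 3 ^ t := by simp
  -- key structure of elements of T
  have key : ∀ idx ∈ T, (Finset.univ.image idx = Finset.univ.image i) ∧
      ∀ j, c (π j) (idx j) ≠ 0 := by
    intro idx hidx
    obtain ⟨⟨hcard, hfil⟩, hprod⟩ := hidx
    have hne : ∀ j, c (π j) (idx j) ≠ 0 := fun j h =>
      hprod (Finset.prod_eq_zero (Finset.mem_univ j) h)
    refine ⟨?_, hne⟩
    have hsub : Finset.univ.image idx ⊆ Finset.univ.image i := by
      intro m hm
      obtain ⟨a, b, hab, hset⟩ := Finset.card_eq_two.mp (hfil m hm)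
      have haf : idx a = m := by
        have : a ∈ Finset.univ.filter (fun j => idx j = m) := by rw [hset]; simp
        simpa using this
      have hbf : idx b = m := by
        have : b ∈ Finset.univ.filter (fun j => idx j = m) := by rw [hset]; simp
        simpa using this
      by_contra hmi
      have hmr : m ∉ Set.range i := by
        rintro ⟨k, hk⟩
        exact hmi (Finset.mem_image.mpr ⟨k, Finset.mem_univ k, hk⟩)
      have hble := hb m hmr
      have hpair : ({π a, π b} : Set (Fin t × Fin 2)) ⊆ {p | c p m ≠ 0} := by
        rintro p (rfl | rfl)
        · exact haf ▸ hne a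
        · exact hbf ▸ hne b
      have h2 : 2 ≤ {p : Fin t × Fin 2 | c p m ≠ 0}.ncard := by
        have hne2 : π a ≠ π b := fun h => hab (π.injective h)
        calc 2 = ({π a, π b} : Set (Fin t × Fin 2)).ncard := (Set.ncard_pair hne2).symm
          _ ≤ _ := Set.ncard_le_ncard hpair (Set.toFinite _)
      omega
    apply Finset.eq_of_subset_of_card_le hsub
    rw [Finset.card_image_of_injective _ hinj, Finset.card_univ, Fintype.card_fin, hcard]
  -- the injection
  set Φ : (Fin (2 * t) → Fin N) → (Fin t → Finset (Fin (2 * t))) :=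
    fun idx k => Finset.univ.filter (fun j' => idx j' = i k) with hΦ
  have hmaps : ∀ idx ∈ T, Φ idx ∈ B := by
    intro idx hidx
    obtain ⟨him, hne⟩ := key idx hidx
    rw [hB, Fintype.mem_piFinset]
    intro k
    rw [Finset.mem_powersetCard]
    constructor
    · intro j hj
      simp only [hΦ, Finset.mem_filter, Finset.mem_univ, true_and] at hj
      simp only [hSdef, Finset.mem_filter, Finset.mem_univ, true_and]
      rw [← hj]
      exact hne j
    · have hik : i k ∈ Finset.univ.image idx :=
        him ▸ Finset.mem_image_of_mem i (Finset.mem_univ k)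
      exact hidx.1.2 (i k) hik
  have hinjΦ : Set.InjOn Φ T := by
    intro idx1 h1 idx2 h2 heq
    funext j
    obtain ⟨him1, _⟩ := key idx1 h1
    have hmem : idx1 j ∈ Finset.univ.image i :=
      him1 ▸ Finset.mem_image_of_mem idx1 (Finset.mem_univ j)
    obtain ⟨k, _, hk⟩ := Finset.mem_image.mp hmem
    have hj1 : j ∈ Φ idx1 k := by simp [hΦ, hk]
    rw [heq] at hj1
    have : idx2 j = i k := by simpa [hΦ] using hj1
    rw [this, hk]
  calc T.ncard = (Φ '' T).ncard := (Set.ncard_image_of_injOn hinjΦ).symm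
    _ ≤ (↑B : Set (Fin t → Finset (Fin (2 * t)))).ncard :=
        Set.ncard_le_ncard (by rintro _ ⟨idx, hidx, rfl⟩; exact hmaps idx hidx) B.finite_toSet
    _ = B.card := Set.ncard_coe_finset B
    _ ≤ 3 ^ t := hBcard
end

section
/- Let C ≤ F^N be a linear code with systematic encoding on n information symbols, and suppose its dual code C⊥ contains, for every t-subset {i_1 > ... > i_t} of [n], pairs of dual codewords c^{(j,1)}, c^{(j,2)} (j ∈ [t]) such that supp(c^{(j,1)}) ∩ supp(c^{(j,2)}) = {i_j}, each i_j appears in at most three of the 2t supports, and every other index appears in at most one support. Then dim C⊥ ≥ ( C(n,t) · (2t)!/(2^t · 3^t) )^{1/(2t)}. -/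
/-- The dual code of a linear code `C ≤ F^N`. -/
def dualCode {F : Type*} [Field F] {N : ℕ} (C : Submodule F (Fin N → F)) :
    Submodule F (Fin N → F) where
  carrier := {v | ∀ u ∈ C, ∑ m, v m * u m = 0}
  zero_mem' := by intro u hu; simp
  add_mem' := by
    intro a b ha hb u hu
    simp [add_mul, Finset.sum_add_distrib, ha u hu, hb u hu]
  smul_mem' := by
    intro r a ha u hu
    have := ha u hu
    simp only [Pi.smul_apply, smul_eq_mul, mul_assoc, ← Finset.mul_sum, this, mul_zero]

section Aux
open Finset
open scoped Classical


variable {F : Type*} [Field F] {N t : ℕ}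

/-- The "tensor" function associated to an ordering `σ` of the `2t` codewords. -/
def auxT (c : Fin t × Fin 2 → Fin N → F) (σ : (Fin t × Fin 2) ≃ Fin (2*t)) :
    (Fin (2*t) → Fin N) → F := fun m => ∏ r, c (σ.symm r) (m r)

/-- The evaluation point associated to `σ`. -/
def auxM (w : Fin t → Fin N) (σ : (Fin t × Fin 2) ≃ Fin (2*t)) : Fin (2*t) → Fin N :=
  fun r => w (σ.symm r).1

lemma auxT_diag_ne_zero {c : Fin t × Fin 2 → Fin N → F} {w : Fin t → Fin N}
    (h : ∀ p : Fin t × Fin 2, c p (w p.1) ≠ 0) (σ : (Fin t × Fin 2) ≃ Fin (2*t)) :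
    auxT c σ (auxM w σ) ≠ 0 := by
  rw [auxT, Finset.prod_ne_zero_iff]
  intro r _
  exact h (σ.symm r)

lemma auxT_cross_zero {c : Fin t × Fin 2 → Fin N → F}
    (σ : (Fin t × Fin 2) ≃ Fin (2*t)) (m0 : Fin N)
    (h1 : {p : Fin t × Fin 2 | c p m0 ≠ 0}.ncard ≤ 1)
    (mm : Fin (2*t) → Fin N) (r1 r2 : Fin (2*t)) (hr : r1 ≠ r2)
    (hm1 : mm r1 = m0) (hm2 : mm r2 = m0) :
    auxT c σ mm = 0 := by
  by_contra h
  have h' := Finset.prod_ne_zero_iff.mp h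
  have h1' : c (σ.symm r1) m0 ≠ 0 := by rw [← hm1]; exact h' r1 (mem_univ _)
  have h2' : c (σ.symm r2) m0 ≠ 0 := by rw [← hm2]; exact h' r2 (mem_univ _)
  have hne : σ.symm r1 ≠ σ.symm r2 := fun e => hr (σ.symm.injective e)
  have hsub : ({σ.symm r1, σ.symm r2} : Set (Fin t × Fin 2)) ⊆ {p | c p m0 ≠ 0} := by
    rintro p (rfl | rfl) <;> assumption
  have := Set.ncard_le_ncard hsub (Set.toFinite _)
  rw [Set.ncard_pair hne] at this
  omega

lemma auxT_count {c : Fin t × Fin 2 → Fin N → F} {w : Fin t → Fin N}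
    (h3 : ∀ j : Fin t, {p : Fin t × Fin 2 | c p (w j) ≠ 0}.ncard ≤ 3)
    (σ0 : (Fin t × Fin 2) ≃ Fin (2*t)) :
    (univ.filter (fun σ' : (Fin t × Fin 2) ≃ Fin (2*t) => auxT c σ' (auxM w σ0) ≠ 0)).card
      ≤ 6 ^ t := by
  classical
  set B : Fin t → Finset (Fin t × Fin 2) :=
    fun j => univ.filter (fun p => c p (w j) ≠ 0) with hB
  have hBcard : ∀ j, (B j).card ≤ 3 := by
    intro j
    have := h3 j
    rwa [Set.ncard_eq_toFinset_card', Set.toFinset_setOf] at this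
  have key : (univ.filter (fun σ' : (Fin t × Fin 2) ≃ Fin (2*t) =>
      auxT c σ' (auxM w σ0) ≠ 0)).card ≤
      (Fintype.piFinset (fun j : Fin t => (B j).offDiag)).card := by
    apply Finset.card_le_card_of_injOn
      (fun σ' => fun j => (σ'.symm (σ0 (j, 0)), σ'.symm (σ0 (j, 1))))
    · intro σ' hσ'
      rw [Finset.mem_coe, mem_filter] at hσ'
      have hall : ∀ r, c (σ'.symm r) (w (σ0.symm r).1) ≠ 0 := by
        intro r
        have := (Finset.prod_ne_zero_iff.mp hσ'.2) r (mem_univ _)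
        simpa [auxM] using this
      rw [Finset.mem_coe, Fintype.mem_piFinset]
      intro j
      rw [Finset.mem_offDiag]
      refine ⟨?_, ?_, ?_⟩
      · have := hall (σ0 (j, 0)); simp at this
        simp [hB, this]
      · have := hall (σ0 (j, 1)); simp at this
        simp [hB, this]
      · intro e
        have e2 := σ0.injective (σ'.symm.injective e)
        simpa using congrArg Prod.snd e2
    · intro σ1 h1 σ2 h2 he
      have : ∀ r, σ1.symm r = σ2.symm r := by
        intro r
        obtain ⟨p, rfl⟩ := σ0.surjective r
        obtain ⟨j, k⟩ := p
        have := congrFun he j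
        fin_cases k
        · exact congrArg Prod.fst this
        · exact congrArg Prod.snd this
      have hs : σ1.symm = σ2.symm := Equiv.ext this
      simpa using congrArg Equiv.symm hs
  refine key.trans ?_
  rw [Fintype.card_piFinset]
  calc ∏ j, (B j).offDiag.card ≤ ∏ _j : Fin t, 6 := by
        apply Finset.prod_le_prod (fun _ _ => Nat.zero_le _)
        intro j _
        rw [Finset.offDiag_card]
        have h := hBcard j
        set k := (B j).card with hk
        interval_cases k <;> simp
    _ = 6 ^ t := by simp

lemma greedy {α : Type*} [DecidableEq α] (R : α → α → Prop)
    (K : ℕ) (hrefl : ∀ a, R a a)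
    (hK : ∀ a : α, ∀ s : Finset α, (s.filter (fun x => R x a)).card ≤ K) :
    ∀ s : Finset α, ∃ L : List α, (∀ x ∈ L, x ∈ s) ∧ s.card ≤ L.length * K ∧
      L.Pairwise (fun x y => ¬ R y x) := by
  intro s
  induction s using Finset.strongInduction with
  | _ s ih =>
    rcases s.eq_empty_or_nonempty with rfl | ⟨a, ha⟩
    · exact ⟨[], by simp, by simp, List.Pairwise.nil⟩
    · have hss : s.filter (fun x => ¬ R x a) ⊂ s :=
        Finset.filter_ssubset.mpr ⟨a, ha, not_not_intro (hrefl a)⟩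
      obtain ⟨L, hmem, hlen, hpair⟩ := ih _ hss
      refine ⟨a :: L, ?_, ?_, ?_⟩
      · intro x hx
        rcases List.mem_cons.mp hx with rfl | hx
        · exact ha
        · exact (Finset.filter_subset _ _) (hmem x hx)
      · have := Finset.card_filter_add_card_filter_not (s := s) (fun x => R x a)
        have h2 := hK a s
        simp only [List.length_cons]
        calc s.card = (s.filter (fun x => R x a)).card + (s.filter (fun x => ¬ R x a)).card :=
              this.symm
          _ ≤ K + L.length * K := by omega
          _ = (L.length + 1) * K := by ring
      · refine List.Pairwise.cons ?_ hpair
        intro y hy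
        exact (Finset.mem_filter.mp (hmem y hy)).2


variable {F : Type*} [Field F] {N t : ℕ}

theorem stmt14_core {n : ℕ} (hn : n ≤ N) (ht : 1 ≤ t) (htn : t ≤ n)
    (D : Submodule F (Fin N → F))
    (hdual : ∀ i : Fin t → Fin n, (∀ a b : Fin t, a < b → i b < i a) →
      ∃ c : Fin t × Fin 2 → (Fin N → F),
        (∀ p, c p ∈ D) ∧
        (∀ (j : Fin t) (m : Fin N),
          (c (j, 0) m ≠ 0 ∧ c (j, 1) m ≠ 0) ↔ m = Fin.castLE hn (i j)) ∧
        (∀ j : Fin t,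
          {p : Fin t × Fin 2 | c p (Fin.castLE hn (i j)) ≠ 0}.ncard ≤ 3) ∧
        (∀ m : Fin N, (∀ j : Fin t, m ≠ Fin.castLE hn (i j)) →
          {p : Fin t × Fin 2 | c p m ≠ 0}.ncard ≤ 1)) :
    ((n.choose t : ℝ) * (Nat.factorial (2 * t)) / (2 ^ t * 3 ^ t))
        ^ ((1 : ℝ) / (2 * t : ℝ))
      ≤ (Module.finrank F ↥D : ℝ) := by
  set w : {S : Finset (Fin n) // S.card = t} → Fin t → Fin N :=
    fun S j => Fin.castLE hn (S.1.orderEmbOfFin S.2 j.rev) with hw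
  have key : ∀ S : {S : Finset (Fin n) // S.card = t},
      ∃ (c : Fin t × Fin 2 → Fin N → F) (L : List ((Fin t × Fin 2) ≃ Fin (2*t))),
      (∀ p, c p ∈ D) ∧
      (∀ p : Fin t × Fin 2, c p (w S p.1) ≠ 0) ∧
      (∀ m : Fin N, (∀ j, m ≠ w S j) → {p : Fin t × Fin 2 | c p m ≠ 0}.ncard ≤ 1) ∧
      (2*t).factorial ≤ L.length * 6^t ∧
      L.Pairwise (fun x y => auxT c y (auxM (w S) x) = 0) := by
    intro S
    have hdec : ∀ a b : Fin t, a < b →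
        (fun j => S.1.orderEmbOfFin S.2 j.rev) b < (fun j => S.1.orderEmbOfFin S.2 j.rev) a := by
      intro a b hab
      exact (S.1.orderEmbOfFin S.2).strictMono (Fin.rev_lt_rev.mpr hab)
    obtain ⟨c, hc1, hc2, hc3, hc4⟩ := hdual _ hdec
    have hne : ∀ p : Fin t × Fin 2, c p (w S p.1) ≠ 0 := by
      rintro ⟨j, k⟩
      have h := (hc2 j (w S j)).mpr rfl
      fin_cases k
      · exact h.1
      · exact h.2
    have hcount := auxT_count (c := c) (w := w S) (fun j => hc3 j)
    obtain ⟨L, _, hlen, hpair⟩ := greedy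
      (fun σ' σ : (Fin t × Fin 2) ≃ Fin (2*t) => auxT c σ' (auxM (w S) σ) ≠ 0) (6^t)
      (fun σ => auxT_diag_ne_zero hne σ)
      (fun a s => by
        refine le_trans (Finset.card_le_card ?_) (hcount a)
        intro x hx
        simp only [Finset.mem_filter] at hx ⊢
        exact ⟨Finset.mem_univ _, hx.2⟩) Finset.univ
    have hcardeq : (Finset.univ : Finset ((Fin t × Fin 2) ≃ Fin (2*t))).card
        = (2*t).factorial := by
      rw [Finset.card_univ,
        Fintype.card_equiv (finProdFinEquiv.trans (finCongr (mul_comm t 2)))]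
      simp [mul_comm]
    exact ⟨c, L, hc1, hne, (fun m hm => hc4 m hm), hcardeq ▸ hlen,
      hpair.imp (fun h => not_not.mp h)⟩
  choose c L hmemD hdiagne hprop4 hlen hpair using key
  -- cross-subset separation
  have hcross : ∀ S S' : {S : Finset (Fin n) // S.card = t}, S ≠ S' →
      ∃ j0, ∀ j', w S j0 ≠ w S' j' := by
    intro S S' hss
    have hnsub : ¬ S.1 ⊆ S'.1 := by
      intro hsub
      exact hss (Subtype.ext (Finset.eq_of_subset_of_card_le hsub (by rw [S.2, S'.2])))
    obtain ⟨x, hxS, hxS'⟩ := Finset.not_subset.mp hnsub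
    have hx : x ∈ Set.range (S.1.orderEmbOfFin S.2) := by
      rw [Finset.range_orderEmbOfFin]; exact hxS
    obtain ⟨y, hy⟩ := hx
    refine ⟨y.rev, fun j' e => ?_⟩
    have h1 : w S y.rev = Fin.castLE hn x := by
      rw [hw]; simp [Fin.rev_rev, hy]
    rw [h1] at e
    have := Fin.castLE_inj.mp e
    exact hxS' (this ▸ Finset.orderEmbOfFin_mem S'.1 S'.2 j'.rev)
  -- the independent family
  set ι := (S : {S : Finset (Fin n) // S.card = t}) × Fin (L S).length with hι
  set v : ι → (Fin (2*t) → Fin N) → F :=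
    fun i => auxT (c i.1) ((L i.1).get i.2) with hv
  set μ : ι → Fin (2*t) → Fin N :=
    fun i => auxM (w i.1) ((L i.1).get i.2) with hμ
  have hdiag : ∀ i : ι, v i (μ i) ≠ 0 := fun i => auxT_diag_ne_zero (hdiagne i.1) _
  have hupper : ∀ (S : {S : Finset (Fin n) // S.card = t})
      (k k' : Fin (L S).length), k < k' →
      auxT (c S) ((L S).get k') (auxM (w S) ((L S).get k)) = 0 :=
    fun S => List.pairwise_iff_get.mp (hpair S)
  have hli : LinearIndependent F v := by
    rw [Fintype.linearIndependent_iff]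
    intro g hg
    have main : ∀ kk : ℕ, ∀ i : ι, (i.2 : ℕ) = kk → g i = 0 := by
      intro kk
      induction kk using Nat.strong_induction_on with
      | _ kk ih =>
        rintro ⟨S, k⟩ hik
        have hev : ∑ i' : ι, g i' * v i' (μ ⟨S, k⟩) = 0 := by
          have h := congrFun hg (μ ⟨S, k⟩)
          simpa [Finset.sum_apply] using h
        rw [Finset.sum_eq_single (⟨S, k⟩ : ι) ?_ (by simp)] at hev
        · rcases mul_eq_zero.mp hev with h | h
          · exact h
          · exact absurd h (hdiag ⟨S, k⟩)
        · rintro ⟨S', k'⟩ - hne'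
          by_cases hSS : S' = S
          · subst hSS
            have hkk : k' ≠ k := fun e => hne' (by rw [e])
            rcases lt_or_gt_of_ne hkk with hlt | hgt
            · have hk2 : (k : ℕ) = kk := hik
              have h0 : g ⟨S', k'⟩ = 0 := ih k' (by omega) ⟨S', k'⟩ rfl
              rw [h0, zero_mul]
            · have h0 : v ⟨S', k'⟩ (μ ⟨S', k⟩) = 0 := hupper S' k k' hgt
              rw [h0, mul_zero]
          · obtain ⟨j0, hj0⟩ := hcross S S' (fun e => hSS e.symm)
            have h0 : v ⟨S', k'⟩ (μ ⟨S, k⟩) = 0 := by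
              apply auxT_cross_zero _ (w S j0) (hprop4 S' _ (fun j' e => hj0 j' e))
                _ (((L S).get k) (j0, 0)) (((L S).get k) (j0, 1))
              · intro e
                have := ((L S).get k).injective e
                simpa using congrArg Prod.snd this
              · simp [hμ, auxM]
              · simp [hμ, auxM]
            rw [h0, mul_zero]
    exact fun i => main i.2 i rfl
  -- the span of basis products
  set dd := Module.finrank F ↥D with hdd
  set bB : Module.Basis (Fin dd) F ↥D := Module.finBasis F ↥D with hbB
  set gfun : (Fin (2*t) → Fin dd) → ((Fin (2*t) → Fin N) → F) :=
    fun f m => ∏ r, ((bB (f r) : ↥D) : Fin N → F) (m r) with hgfun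
  have hvW : ∀ i : ι, v i ∈ Submodule.span F (Set.range gfun) := by
    rintro ⟨S, k⟩
    set σ := (L S).get k with hσ
    set a : Fin t × Fin 2 → Fin dd → F :=
      fun p => bB.repr ⟨c S p, hmemD S p⟩ with ha
    have hcsum : ∀ p (x : Fin N),
        c S p x = ∑ s, a p s * ((bB s : ↥D) : Fin N → F) x := by
      intro p x
      have h := bB.sum_repr ⟨c S p, hmemD S p⟩
      have h2 := congrArg (fun z : ↥D => (z : Fin N → F) x) h
      simp only [AddSubmonoidClass.coe_finset_sum, Finset.sum_apply, SetLike.val_smul,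
        Pi.smul_apply, smul_eq_mul] at h2
      exact h2.symm
    have hrw : v ⟨S, k⟩ = ∑ f ∈ Fintype.piFinset (fun _ : Fin (2*t) => (univ : Finset (Fin dd))),
        (∏ r, a (σ.symm r) (f r)) • gfun f := by
      funext m
      simp only [hv, auxT, Finset.sum_apply, Pi.smul_apply, smul_eq_mul, hgfun]
      rw [Finset.prod_congr rfl (fun r _ => hcsum (σ.symm r) (m r)),
        Finset.prod_univ_sum]
      exact Finset.sum_congr rfl (fun f _ => Finset.prod_mul_distrib)
    rw [hrw]
    exact Submodule.sum_mem _ (fun f _ =>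
      Submodule.smul_mem _ _ (Submodule.subset_span ⟨f, rfl⟩))
  -- cardinality bounds
  have hliW : LinearIndependent F
      (fun i : ι => (⟨v i, hvW i⟩ : Submodule.span F (Set.range gfun))) := by
    apply LinearIndependent.of_comp (Submodule.span F (Set.range gfun)).subtype
    exact hli
  have hcard1 : Fintype.card ι ≤ dd ^ (2*t) := by
    have h1 : Fintype.card ι ≤ Module.finrank F ↥(Submodule.span F (Set.range gfun)) :=
      hliW.fintype_card_le_finrank
    have h2 : Module.finrank F ↥(Submodule.span F (Set.range gfun))
        ≤ (Set.range gfun).toFinset.card := finrank_span_le_card _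
    have h3 : (Set.range gfun).toFinset.card ≤ Fintype.card (Fin (2*t) → Fin dd) := by
      rw [Set.toFinset_range]
      exact (Finset.card_image_le).trans (by simp)
    have h4 : Fintype.card (Fin (2*t) → Fin dd) = dd ^ (2*t) := by
      simp [Fintype.card_fun]
    omega
  have hcard2 : n.choose t * (2*t).factorial ≤ Fintype.card ι * 6^t := by
    have hcardι : Fintype.card ι = ∑ S : {S : Finset (Fin n) // S.card = t}, (L S).length := by
      simp [hι, Fintype.card_sigma]
    calc n.choose t * (2*t).factorial
        = ∑ _S : {S : Finset (Fin n) // S.card = t}, (2*t).factorial := by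
          rw [Finset.sum_const, Finset.card_univ, Fintype.card_finset_len,
            Fintype.card_fin, smul_eq_mul]
      _ ≤ ∑ S : {S : Finset (Fin n) // S.card = t}, (L S).length * 6^t :=
          Finset.sum_le_sum (fun S _ => hlen S)
      _ = (∑ S : {S : Finset (Fin n) // S.card = t}, (L S).length) * 6^t :=
          (Finset.sum_mul _ _ _).symm
      _ = Fintype.card ι * 6^t := by rw [hcardι]
  have hfinal : n.choose t * (2*t).factorial ≤ dd ^ (2*t) * 6^t :=
    hcard2.trans (Nat.mul_le_mul_right _ hcard1)
  -- real arithmetic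
  have hreal : ((n.choose t : ℝ) * (2*t).factorial) ≤ (dd : ℝ) ^ (2*t) * 6^t := by
    exact_mod_cast hfinal
  have h6 : ((2:ℝ) ^ t * 3 ^ t) = 6 ^ t := by
    rw [← mul_pow]; norm_num
  rw [h6]
  have hX : (n.choose t : ℝ) * (2*t).factorial / 6^t ≤ (dd : ℝ) ^ (2*t) := by
    rw [div_le_iff₀ (by positivity)]
    exact hreal
  have htpos : (0:ℝ) < 2 * t := by
    have : (1:ℝ) ≤ t := by exact_mod_cast ht
    linarith
  calc ((n.choose t : ℝ) * (2*t).factorial / 6^t) ^ ((1:ℝ) / (2 * t : ℝ))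
      ≤ ((dd : ℝ) ^ (2*t)) ^ ((1:ℝ) / (2 * t : ℝ)) := by
        apply Real.rpow_le_rpow (by positivity) hX (by positivity)
    _ = (dd : ℝ) := by
        rw [← Real.rpow_natCast (dd : ℝ) (2*t), ← Real.rpow_mul (by positivity)]
        rw [show ((2*t : ℕ) : ℝ) * ((1:ℝ) / (2 * t : ℝ)) = 1 by
          push_cast
          field_simp]
        exact Real.rpow_one _

end Aux

/-- If, for every decreasing `t`-tuple `i_1 > ⋯ > i_t` in `[n]`, the dual of
the code contains pairs of dual codewords `c^{(j,1)}, c^{(j,2)}` with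
`supp(c^{(j,1)}) ∩ supp(c^{(j,2)}) = {i_j}`, each `i_j` in at most three of
the `2t` supports, and every other index in at most one support, then
`dim C⊥ ≥ (C(n,t) · (2t)!/(2^t·3^t))^{1/(2t)}`. -/
theorem stmt_14 {F : Type*} [Field F] {n N t : ℕ} (hn : n ≤ N)
    (ht : 1 ≤ t) (htn : t ≤ n)
    (E : (Fin n → F) →ₗ[F] (Fin N → F))
    (hsys : IsSystematic hn E)
    (hdual : ∀ i : Fin t → Fin n, (∀ a b : Fin t, a < b → i b < i a) →
      ∃ c : Fin t × Fin 2 → (Fin N → F),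
        (∀ p, c p ∈ dualCode (LinearMap.range E)) ∧
        (∀ (j : Fin t) (m : Fin N),
          (c (j, 0) m ≠ 0 ∧ c (j, 1) m ≠ 0) ↔ m = Fin.castLE hn (i j)) ∧
        (∀ j : Fin t,
          {p : Fin t × Fin 2 | c p (Fin.castLE hn (i j)) ≠ 0}.ncard ≤ 3) ∧
        (∀ m : Fin N, (∀ j : Fin t, m ≠ Fin.castLE hn (i j)) →
          {p : Fin t × Fin 2 | c p m ≠ 0}.ncard ≤ 1)) :
    ((n.choose t : ℝ) * (Nat.factorial (2 * t)) / (2 ^ t * 3 ^ t))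
        ^ ((1 : ℝ) / (2 * t : ℝ))
      ≤ (Module.finrank F (dualCode (LinearMap.range E)) : ℝ) := by
  exact stmt14_core hn ht htn (dualCode (LinearMap.range E)) hdual
end
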